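/- (Case 2 of the proof of Proposition 1(ii).) Suppose that in the 2×2 hospital game no pair of non-diversified strategies contains an optimal response, i.e. P₂ > P₁·a₁, P₂ > P₁·a₂, P₁ > P₂·a₁, and P₁ > P₂·a₂. Then both diversified profiles are Nash equilibria: the profile where q₁ plays r₁ and q₂ plays r₂ is a Nash equilibrium, and the profile where q₁ plays r₂ and q₂ plays r₁ is a Nash equilibrium. -/

import Mathlib

/-- The two wards a hospital can choose to make excel. -/
inductive Ward : Type
  | r1 | r2
deriving DecidableEq

open Ward

/-- The size of the patient group associated with a ward. -/
def grp (P1 P2 : ℝ) : Ward → ℝ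
  | r1 => P1
  | r2 => P2

/-- Payoff of hospital q₁ when q₁ chooses `s1` and q₂ chooses `s2`:
if both choose the same ward, q₁ gets the fraction `a1` of that ward's group;
otherwise q₁ gets the full group of its chosen ward. -/
def pay1 (P1 P2 a1 : ℝ) (s1 s2 : Ward) : ℝ :=
  if s1 = s2 then grp P1 P2 s1 * a1 else grp P1 P2 s1

/-- Payoff of hospital q₂ when q₁ chooses `s1` and q₂ chooses `s2`:
if both choose the same ward, q₂ gets the fraction `a2` of that ward's group;
otherwise q₂ gets the full group of its chosen ward. -/
def pay2 (P1 P2 a2 : ℝ) (s1 s2 : Ward) : ℝ :=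
  if s1 = s2 then grp P1 P2 s2 * a2 else grp P1 P2 s2

/-- A strategy profile `(s1, s2)` is a Nash equilibrium if neither hospital can
strictly increase its payoff by unilaterally changing its strategy. -/
def IsNash (P1 P2 a1 a2 : ℝ) (s1 s2 : Ward) : Prop :=
  (∀ t1 : Ward, pay1 P1 P2 a1 t1 s2 ≤ pay1 P1 P2 a1 s1 s2) ∧
  (∀ t2 : Ward, pay2 P1 P2 a2 s1 t2 ≤ pay2 P1 P2 a2 s1 s2)

theorem Ward.forall {p : Ward → Prop} : (∀ w, p w) ↔ p r1 ∧ p r2 :=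
  ⟨fun h => ⟨h r1, h r2⟩, fun ⟨h1, h2⟩ w => by cases w <;> assumption⟩

/-- In a diversified profile each hospital holds a whole group, so the only deviation to check
is moving onto the rival's ward and sharing its group. -/
theorem isNash_iff_of_ne {P1 P2 a1 a2 : ℝ} {s1 s2 : Ward} (h : s1 ≠ s2) :
    IsNash P1 P2 a1 a2 s1 s2 ↔
      grp P1 P2 s2 * a1 ≤ grp P1 P2 s1 ∧ grp P1 P2 s1 * a2 ≤ grp P1 P2 s2 := by
  cases s1 <;> cases s2 <;> simp_all [IsNash, pay1, pay2, Ward.forall]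

theorem stmt6_general (P1 P2 a1 a2 : ℝ)
    (h1 : P2 > P1 * a1) (h2 : P2 > P1 * a2)
    (h3 : P1 > P2 * a1) (h4 : P1 > P2 * a2) :
    IsNash P1 P2 a1 a2 r1 r2 ∧ IsNash P1 P2 a1 a2 r2 r1 :=
  ⟨(isNash_iff_of_ne (by decide)).2 ⟨h3.le, h2.le⟩,
    (isNash_iff_of_ne (by decide)).2 ⟨h1.le, h4.le⟩⟩

/-- Case 2 of the proof of Proposition 1(ii): if no non-diversified pair of
strategies contains an optimal response (i.e. P₂ > P₁·a₁, P₂ > P₁·a₂,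
P₁ > P₂·a₁ and P₁ > P₂·a₂), then both diversified profiles are Nash
equilibria. -/
theorem stmt6 (P1 P2 a1 a2 : ℝ)
    (hP1 : 0 < P1) (hP2 : 0 < P2) (ha1 : 0 < a1) (ha2 : 0 < a2)
    (hsum : a1 + a2 = 1)
    (h1 : P2 > P1 * a1) (h2 : P2 > P1 * a2)
    (h3 : P1 > P2 * a1) (h4 : P1 > P2 * a2) :
    IsNash P1 P2 a1 a2 r1 r2 ∧ IsNash P1 P2 a1 a2 r2 r1 :=
  stmt6_general P1 P2 a1 a2 h1 h2 h3 h4
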